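/- Let α > 0, let f ∈ L¹[−π,π] with f ≥ 0, let b ∈ (−π,0) ∪ (0,π), let f_H be the polarization of f with respect to b, and let u_f and u_{f_H} be the solutions of the Robin problem with heat sources f and f_H respectively. Set I = [b,π] if b > 0 and I = [−π,b] if b < 0. Then for every x ∈ I, writing x' = 2b − x, one has u_f(x) ≤ u_{f_H}(x'). -/

import Mathlib

open MeasureTheory Real Set

/-- The constant `c_α = α/(1+απ)`. -/
noncomputable def cA (α : ℝ) : ℝ := α / (1 + α * π)

/-- The Green's function of the Robin problem on `[-π, π]`. -/
noncomputable def robinGreen (α x y : ℝ) : ℝ :=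
  -(1/2) * cA α * x * y - (1/2) * |x - y| + 1 / (2 * cA α)

/-- The solution of the Robin problem with heat source `f`. -/
noncomputable def robinSol (α : ℝ) (f : ℝ → ℝ) (x : ℝ) : ℝ :=
  ∫ y in (-π)..π, robinGreen α x y * f y

/-- The polarization (towards zero) of `f : [-π,π] → ℝ` with respect to `b`. -/
noncomputable def polar (b : ℝ) (f : ℝ → ℝ) (x : ℝ) : ℝ :=
  if 0 < b then
    if x < 2 * b - π then f x
    else if x ≤ b then max (f x) (f (2 * b - x))
    else min (f x) (f (2 * b - x))
  else
    if x ≤ b then min (f x) (f (2 * b - x))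
    else if x ≤ 2 * b + π then max (f x) (f (2 * b - x))
    else f x

/-!
Split `[-π, π]` at `2b - π` and `b` (case `b > 0`; the case `b < 0` is its mirror image under
`x ↦ -x`). On `[-π, 2b - π]` the polarization leaves `f` unchanged, and `G(x, y) ≤ G(x', y)`
there because `y` lies on the side of `x'`. The remaining part `[2b - π, π]` is symmetric about
`b`, so reflecting `[b, π]` onto `[2b - π, b]` pairs each `y` with `2b - y`, and the pointwise
inequality for the pair is a rearrangement inequality: `f_H` puts the larger of `f(y)`, `f(2b - y)`
at the point closer to `x'`.
-/

theorem mul_add_mul_le_mul_max_add_mul_min {g₁ g₂ h₁ h₂ p q : ℝ} (hp : 0 ≤ p) (hq : 0 ≤ q)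
    (hg₁ : g₁ ≤ h₁) (hg₂ : g₂ ≤ h₁) (hsum : g₁ + g₂ ≤ h₁ + h₂) :
    g₁ * p + g₂ * q ≤ h₁ * max p q + h₂ * min p q := by
  rcases le_total q p with hqp | hpq
  · rw [max_eq_left hqp, min_eq_right hqp]
    nlinarith [mul_nonneg (sub_nonneg.2 hg₁) (sub_nonneg.2 hqp)]
  · rw [max_eq_right hpq, min_eq_left hpq]
    nlinarith [mul_nonneg (sub_nonneg.2 hg₂) (sub_nonneg.2 hpq)]

section Reflection

variable {h h₁ h₂ : ℝ → ℝ} {a c m d : ℝ}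

theorem IntervalIntegrable.comp_reflect (hd : 2 * m - c = d)
    (hmd : IntervalIntegrable h volume m d) :
    IntervalIntegrable (fun y => h (2 * m - y)) volume c m := by
  simpa [← hd, two_mul] using (hmd.comp_sub_left (2 * m)).symm

theorem intervalIntegral.integral_eq_add_integral_add_reflect (hd : 2 * m - c = d)
    (hac : IntervalIntegrable h volume a c) (hcm : IntervalIntegrable h volume c m)
    (hmd : IntervalIntegrable h volume m d) :
    ∫ y in a..d, h y = (∫ y in a..c, h y) + ∫ y in c..m, (h y + h (2 * m - y)) := by
  have hreflect : ∫ y in c..m, h (2 * m - y) = ∫ y in m..d, h y := by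
    rw [intervalIntegral.integral_comp_sub_left, ← hd, two_mul, add_sub_cancel_right]
  rw [intervalIntegral.integral_add hcm (hmd.comp_reflect hd), hreflect,
    intervalIntegral.integral_add_adjacent_intervals hcm hmd,
    intervalIntegral.integral_add_adjacent_intervals hac (hcm.trans hmd)]

theorem intervalIntegral.integral_mono_of_le_of_add_reflect_le (hd : 2 * m - c = d)
    (hac : a ≤ c) (hcm : c ≤ m)
    (hh₁ : IntervalIntegrable h₁ volume a d) (hh₂ : IntervalIntegrable h₂ volume a d)
    (hlow : ∀ y ∈ Ioo a c, h₁ y ≤ h₂ y)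
    (hpair : ∀ y ∈ Ioo c m, h₁ y + h₁ (2 * m - y) ≤ h₂ y + h₂ (2 * m - y)) :
    ∫ y in a..d, h₁ y ≤ ∫ y in a..d, h₂ y := by
  have hmd : m ≤ d := by linarith
  have hpieces {h : ℝ → ℝ} (hh : IntervalIntegrable h volume a d) :
      IntervalIntegrable h volume a c ∧ IntervalIntegrable h volume c m ∧
        IntervalIntegrable h volume m d := by
    refine ⟨hh.mono_set ?_, hh.mono_set ?_, hh.mono_set ?_⟩ <;>
      exact uIcc_subset_uIcc (mem_uIcc_of_le (by linarith) (by linarith))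
        (mem_uIcc_of_le (by linarith) (by linarith))
  obtain ⟨h₁ac, h₁cm, h₁md⟩ := hpieces hh₁
  obtain ⟨h₂ac, h₂cm, h₂md⟩ := hpieces hh₂
  rw [intervalIntegral.integral_eq_add_integral_add_reflect hd h₁ac h₁cm h₁md,
    intervalIntegral.integral_eq_add_integral_add_reflect hd h₂ac h₂cm h₂md]
  exact add_le_add (intervalIntegral.integral_mono_on_of_le_Ioo hac h₁ac h₂ac hlow)
    (intervalIntegral.integral_mono_on_of_le_Ioo hcm (h₁cm.add (h₁md.comp_reflect hd))
      (h₂cm.add (h₂md.comp_reflect hd)) hpair)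

end Reflection

section Green

variable {α b x y : ℝ}

theorem cA_pos (hα : 0 < α) : 0 < cA α :=
  div_pos hα (by positivity)

theorem cA_mul_pi_lt_one (hα : 0 < α) : cA α * π < 1 := by
  rw [cA, div_mul_eq_mul_div, div_lt_one (by positivity)]
  linarith

theorem robinGreen_le_robinGreen_reflect (hα : 0 < α) (hb : 0 ≤ b) (hbx : b ≤ x) (hxπ : x ≤ π)
    (hy : -π ≤ y) (hyb : y ≤ b) :
    robinGreen α x y ≤ robinGreen α (2 * b - x) y := by
  have hc := cA_pos hα
  have hcπ := cA_mul_pi_lt_one hα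
  rw [robinGreen, robinGreen, abs_of_nonneg (by linarith : 0 ≤ x - y)]
  -- `G(2b - x, y) - G(x, y)` is `(x - b)(1 + c y)` if `y ≤ 2b - x`, else `c y (x - b) + b - y`
  rcases abs_cases (2 * b - x - y) with ⟨hxy, -⟩ | ⟨hxy, -⟩ <;> rw [hxy]
  · nlinarith [mul_nonneg (sub_nonneg.2 hbx) (by nlinarith : 0 ≤ 1 + cA α * y)]
  · rcases le_or_gt 0 y with hy₀ | hy₀
    · nlinarith [mul_nonneg (mul_nonneg hc.le hy₀) (sub_nonneg.2 hbx)]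
    · nlinarith [mul_nonneg (mul_nonneg hc.le (neg_nonneg.2 hy₀.le))
          (by linarith : 0 ≤ π - (x - b)),
        mul_pos (neg_pos.2 hy₀) (by linarith : 0 < 1 - cA α * π)]

theorem robinGreen_reflect_le_robinGreen_reflect (hα : 0 < α) (hb : 0 ≤ b) (hyx : y ≤ x) :
    robinGreen α x (2 * b - y) ≤ robinGreen α (2 * b - x) y := by
  have hc := cA_pos hα
  rw [robinGreen, robinGreen, show x - (2 * b - y) = -(2 * b - x - y) by ring, abs_neg]
  nlinarith [mul_nonneg (mul_nonneg hc.le hb) (sub_nonneg.2 hyx)]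

theorem robinGreen_add_robinGreen_reflect_le (hα : 0 < α) (hb : 0 ≤ b) (hbx : b ≤ x) :
    robinGreen α x y + robinGreen α x (2 * b - y) ≤
      robinGreen α (2 * b - x) y + robinGreen α (2 * b - x) (2 * b - y) := by
  have hc := cA_pos hα
  rw [robinGreen, robinGreen, robinGreen, robinGreen,
    show x - (2 * b - y) = -(2 * b - x - y) by ring, abs_neg,
    show 2 * b - x - (2 * b - y) = -(x - y) by ring, abs_neg]
  nlinarith [mul_nonneg (mul_nonneg hc.le hb) (sub_nonneg.2 hbx)]

theorem robinGreen_neg_neg : robinGreen α (-x) (-y) = robinGreen α x y := by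
  rw [robinGreen, robinGreen, show -x - -y = -(x - y) by ring, abs_neg]
  ring

theorem continuous_robinGreen : Continuous (robinGreen α x) := by
  unfold robinGreen
  fun_prop

theorem robinSol_comp_neg (h : ℝ → ℝ) : robinSol α (fun t => h (-t)) x = robinSol α h (-x) := by
  simpa only [robinSol, robinGreen_neg_neg, neg_neg] using
    intervalIntegral.integral_comp_neg (a := -π) (b := π) fun y => robinGreen α (-x) y * h y

end Green

section Polar

variable {b y : ℝ} {f : ℝ → ℝ}

theorem polar_eq_self (hb : 0 < b) (hy : y < 2 * b - π) : polar b f y = f y := by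
  simp [polar, hb, hy]

theorem polar_eq_max (hb : 0 < b) (hy : y ∈ Icc (2 * b - π) b) :
    polar b f y = max (f y) (f (2 * b - y)) := by
  simp [polar, hb, hy.2, not_lt.2 hy.1]

theorem polar_eq_min (hb : 0 < b) (hbπ : b < π) (hy : b < y) :
    polar b f y = min (f y) (f (2 * b - y)) := by
  simp [polar, hb, not_lt.2 (by linarith : 2 * b - π ≤ y), not_le.2 hy]

theorem polar_neg (hb : b < 0) (hπb : -π ≤ b) :
    polar (-b) (fun t => f (-t)) (-y) = polar b f y := by
  have hσ : -(2 * -b - -y) = 2 * b - y := by ring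
  simp only [polar, neg_neg, hσ, neg_pos.2 hb, (by linarith : ¬ 0 < b), if_true, if_false]
  split_ifs <;> first
    | rfl
    | (exfalso; linarith)
    | (obtain rfl : y = b := by linarith
       simp [show 2 * y - y = y by ring])

theorem intervalIntegrable_polar (hb : 0 < b) (hbπ : b < π)
    (hf : IntervalIntegrable f volume (-π) π) :
    IntervalIntegrable (polar b f) volume (-π) π := by
  have hπ := Real.pi_pos
  have hf_on {c d : ℝ} (hc : -π ≤ c) (hd : d ≤ π) (hcd : c ≤ d) :
      IntervalIntegrable f volume c d :=
    hf.mono_set <| uIcc_subset_uIcc (mem_uIcc_of_le (by linarith) (by linarith))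
      (mem_uIcc_of_le (by linarith) (by linarith))
  have hσ {c d : ℝ} (hc : 2 * b - π ≤ c) (hd : d ≤ π) (hcd : c ≤ d) :
      IntervalIntegrable (fun y => f (2 * b - y)) volume c d := by
    refine (hf.comp_sub_left (2 * b)).symm.mono_set <|
      uIcc_subset_uIcc (mem_uIcc_of_le ?_ ?_) (mem_uIcc_of_le ?_ ?_) <;> linarith
  have hlower : IntervalIntegrable (polar b f) volume (-π) (2 * b - π) :=
    (hf_on le_rfl (by linarith) (by linarith)).congr_uIoo fun y hy => by
      rw [uIoo_of_le (by linarith)] at hy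
      exact (polar_eq_self hb hy.2).symm
  have hmiddle : IntervalIntegrable (polar b f) volume (2 * b - π) b := by
    refine (intervalIntegrable_iff.2 ((intervalIntegrable_iff.1
      (hf_on (by linarith) (by linarith) (by linarith))).sup
      (intervalIntegrable_iff.1 (hσ le_rfl (by linarith) (by linarith))))).congr_uIoo
      fun y hy => ?_
    rw [uIoo_of_le (by linarith)] at hy
    exact (polar_eq_max hb (Ioo_subset_Icc_self hy)).symm
  have hupper : IntervalIntegrable (polar b f) volume b π := by
    refine (intervalIntegrable_iff.2 ((intervalIntegrable_iff.1
      (hf_on (by linarith) le_rfl hbπ.le)).inf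
      (intervalIntegrable_iff.1 (hσ (by linarith) le_rfl hbπ.le)))).congr_uIoo fun y hy => ?_
    rw [uIoo_of_le hbπ.le] at hy
    exact (polar_eq_min hb hbπ hy.1).symm
  exact hlower.trans (hmiddle.trans hupper)

end Polar

section Comparison

variable {α b x : ℝ} {f : ℝ → ℝ}

theorem intervalIntegrable_robinGreen_mul {g : ℝ → ℝ} (hg : IntervalIntegrable g volume (-π) π)
    (z : ℝ) : IntervalIntegrable (fun y => robinGreen α z y * g y) volume (-π) π :=
  hg.continuousOn_mul continuous_robinGreen.continuousOn

theorem robinSol_le_robinSol_polar_of_pos (hα : 0 < α) (hf : IntervalIntegrable f volume (-π) π)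
    (hf0 : ∀ y ∈ Icc (-π) π, 0 ≤ f y) (hb : 0 < b) (hbπ : b < π) (hbx : b ≤ x) (hxπ : x ≤ π) :
    robinSol α f x ≤ robinSol α (polar b f) (2 * b - x) := by
  refine intervalIntegral.integral_mono_of_le_of_add_reflect_le (c := 2 * b - π) (m := b)
    (by ring) (by linarith)
    (by linarith) (intervalIntegrable_robinGreen_mul hf x)
    (intervalIntegrable_robinGreen_mul (intervalIntegrable_polar hb hbπ hf) _)
    (fun y hy => ?_) (fun y hy => ?_)
  · rw [polar_eq_self hb hy.2]
    exact mul_le_mul_of_nonneg_right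
      (robinGreen_le_robinGreen_reflect hα hb.le hbx hxπ hy.1.le (by linarith [hy.2]))
      (hf0 y ⟨hy.1.le, by linarith [hy.2]⟩)
  · rw [polar_eq_max hb (Ioo_subset_Icc_self hy), polar_eq_min hb hbπ (by linarith [hy.2]),
      sub_sub_cancel, min_comm]
    exact mul_add_mul_le_mul_max_add_mul_min (hf0 y ⟨by linarith [hy.1], by linarith [hy.2]⟩)
      (hf0 _ ⟨by linarith [hy.2], by linarith [hy.1]⟩)
      (robinGreen_le_robinGreen_reflect hα hb.le hbx hxπ (by linarith [hy.1]) hy.2.le)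
      (robinGreen_reflect_le_robinGreen_reflect hα hb.le (by linarith [hy.2]))
      (robinGreen_add_robinGreen_reflect_le hα hb.le hbx)

theorem robinSol_le_robinSol_polar_of_neg (hα : 0 < α) (hf : IntervalIntegrable f volume (-π) π)
    (hf0 : ∀ y ∈ Icc (-π) π, 0 ≤ f y) (hb : b < 0) (hπb : -π < b) (hxπ : -π ≤ x) (hxb : x ≤ b) :
    robinSol α f x ≤ robinSol α (polar b f) (2 * b - x) := by
  have hf_neg : IntervalIntegrable (fun t => f (-t)) volume (-π) π := by
    simpa using ((IntervalIntegrable.iff_comp_neg (a := -π) (b := π)).1 hf).symm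
  have hf0_neg : ∀ y ∈ Icc (-π) π, 0 ≤ f (-y) :=
    fun y hy => hf0 (-y) ⟨by linarith [hy.2], by linarith [hy.1]⟩
  have h := robinSol_le_robinSol_polar_of_pos hα hf_neg hf0_neg (neg_pos.2 hb) (by linarith)
    (neg_le_neg hxb) (by linarith)
  rw [← robinSol_comp_neg, show 2 * -b - -x = -(2 * b - x) by ring, ← robinSol_comp_neg] at h
  simpa only [neg_neg, polar_neg hb hπb.le] using h

end Comparison

/-- **`u_f(x) ≤ u_{f_H}(x')` for `x` in the far interval `I` and `x' = 2b - x`.** -/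
theorem robinSol_le_polar_reflected
    (α : ℝ) (hα : 0 < α)
    (f : ℝ → ℝ) (hf : IntegrableOn f (Icc (-π) π))
    (hf0 : ∀ x ∈ Icc (-π) π, 0 ≤ f x)
    (b : ℝ) (hb : b ∈ Ioo (-π) 0 ∪ Ioo 0 π) :
    ∀ x ∈ (if 0 < b then Icc b π else Icc (-π) b),
      robinSol α f x ≤ robinSol α (polar b f) (2 * b - x) := by
  have hf' : IntervalIntegrable f volume (-π) π :=
    (intervalIntegrable_iff_integrableOn_Icc_of_le (by linarith [pi_pos])).2 hf
  intro x hx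
  rcases hb with ⟨hπb, hb⟩ | ⟨hb, hbπ⟩
  · rw [if_neg hb.not_gt] at hx
    exact robinSol_le_robinSol_polar_of_neg hα hf' hf0 hb hπb hx.1 hx.2
  · rw [if_pos hb] at hx
    exact robinSol_le_robinSol_polar_of_pos hα hf' hf0 hb hbπ hx.1 hx.2
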